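/- arXiv:2001.06337 — 3 statements merged into one kernel-verified Lean document; each statement's English description precedes it below -/
import Mathlib

section
/- The matrix A = [[0, 1/L, -1/L], [-1/C_H, -α, 0], [1/C_L, 0, -1/(R_L C_L)]] with L, C_H, C_L, R_L, α > 0 is Hurwitz, i.e., all its eigenvalues have strictly negative real part. -/
/-!
The characteristic polynomial of the matrix is the monic cubic
`λ³ + (α + r) λ² + (α r + 1/(L C_H) + 1/(L C_L)) λ + (r/(L C_H) + α/(L C_L))`, `r = 1/(R_L C_L)`,
whose coefficients are positive and satisfy the Routh–Hurwitz inequality `a₂ a₁ > a₀`.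
For the cubic criterion: if `z = x + iy` is a root with `x ≥ 0`, then either `y = 0` and the cubic
is positive at `x`, or the imaginary part gives `y² = 3x² + 2bx + c`, and substituting this into the
real part yields `d - bc = 8x³ + 8bx² + 2(b² + c)x ≥ 0`.
-/

open Complex

theorem re_neg_of_cubic_eq_zero {b c d : ℝ} (hb : 0 < b) (hc : 0 < c) (hd : 0 < d)
    (hRH : d < b * c) {z : ℂ} (hz : z ^ 3 + b * z ^ 2 + c * z + d = 0) : z.re < 0 := by
  by_contra! hx
  set x := z.re
  set y := z.im
  have hre : x ^ 3 - 3 * x * y ^ 2 + b * (x ^ 2 - y ^ 2) + c * x + d = 0 := by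
    have := congrArg Complex.re hz
    simp only [pow_succ, pow_zero, one_mul, add_re, mul_re, mul_im, ofReal_re, ofReal_im,
      zero_re] at this
    linear_combination this
  have him : y * (3 * x ^ 2 - y ^ 2 + 2 * b * x + c) = 0 := by
    have := congrArg Complex.im hz
    simp only [pow_succ, pow_zero, one_mul, add_im, mul_re, mul_im, ofReal_re, ofReal_im,
      zero_im] at this
    linear_combination this
  rcases eq_or_ne y 0 with hy | hy
  · rw [hy] at hre
    nlinarith [pow_nonneg hx 3, mul_nonneg hb.le (sq_nonneg x), mul_nonneg hc.le hx]
  · have hy2 : y ^ 2 = 3 * x ^ 2 + 2 * b * x + c := by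
      linear_combination -((mul_eq_zero.mp him).resolve_left hy)
    have hgap : d - b * c = 8 * x ^ 3 + 8 * b * x ^ 2 + 2 * (b ^ 2 + c) * x := by
      linear_combination hre + (3 * x + b) * hy2
    nlinarith [pow_nonneg hx 3, mul_nonneg hb.le (sq_nonneg x),
      mul_nonneg (by positivity : (0 : ℝ) ≤ 2 * (b ^ 2 + c)) hx]

/-- The dynamics matrix of the converter with u ≡ 1 is Hurwitz:
every complex eigenvalue has strictly negative real part. -/
theorem stmt_2 (L CH CL RL α : ℝ)
    (hL : 0 < L) (hCH : 0 < CH) (hCL : 0 < CL) (hRL : 0 < RL) (hα : 0 < α) :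
    ∀ μ : ℂ,
      (Matrix.charpoly
        ((!![0, 1/L, -(1/L); -(1/CH), -α, 0; 1/CL, 0, -(1/(RL*CL))] :
          Matrix (Fin 3) (Fin 3) ℝ).map (algebraMap ℝ ℂ))).IsRoot μ →
      μ.re < 0 := by
  intro μ hμ
  set r := 1 / (RL * CL)
  have hr : 0 < r := by positivity
  have hcubic : μ ^ 3 + ((α + r : ℝ) : ℂ) * μ ^ 2
      + ((α * r + 1 / (L * CH) + 1 / (L * CL) : ℝ) : ℂ) * μ
      + ((r / (L * CH) + α / (L * CL) : ℝ) : ℂ) = 0 := by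
    rw [Polynomial.IsRoot, Matrix.eval_charpoly, Matrix.det_fin_three] at hμ
    simp only [Matrix.scalar_apply, one_div, coe_algebraMap, Fin.isValue, Matrix.sub_apply,
      Matrix.diagonal_apply_eq, Matrix.map_apply, Matrix.of_apply, Matrix.cons_val',
      Matrix.cons_val_zero, Matrix.cons_val_fin_one, ofReal_zero, sub_zero, Matrix.cons_val_one,
      ofReal_neg, sub_neg_eq_add, Matrix.cons_val, ne_eq, Fin.reduceEq, not_false_eq_true,
      Matrix.diagonal_apply_ne, sub_self, mul_zero, zero_ne_one, ofReal_inv, zero_sub,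
      one_ne_zero, zero_add, neg_mul, mul_neg, zero_mul, neg_zero, add_zero] at hμ
    push_cast
    linear_combination hμ
  refine re_neg_of_cubic_eq_zero (by positivity) (by positivity) (by positivity) ?_ hcubic
  have hRH_gap : (α + r) * (α * r + 1 / (L * CH) + 1 / (L * CL)) - (r / (L * CH) + α / (L * CL))
      = α ^ 2 * r + α * r ^ 2 + α / (L * CH) + r / (L * CL) := by ring
  have hgap_pos : 0 < α ^ 2 * r + α * r ^ 2 + α / (L * CH) + r / (L * CL) := by positivity
  linarith
end

section
/- Let V(z) = (L x2*²/2) z1² + (1/2) z2² (L(z1 + k*)² + C_H) + (C_L/2) z3². Along trajectories of the reduced sliding dynamics ż1 = -γ1[z1(z2 + x2*) + k* z2], ż2 = (1/(L(z1+k*)² + C_H))·[-L(z1+k*)(z2+x2*) ż1 - α C_H z2 - z3(z1+k*) - x3* z1], ż3 = -(1/(R_L C_L)) z3 - (1/(C_L γ1)) ż1, its derivative satisfies V̇(z) = -γ1 L x2*³ z1² - (α C_H - γ1 L k* x̄1) z2² - (1/R_L) z3² + γ1 L x2* z1 z2² (z1 + 2k*) + z1 (x2* z3 - x3* z2), where x̄1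 = k* x2*. -/
noncomputable def slidingLyapunov (L CH CL ks x2s z1 z2 z3 : ℝ) : ℝ :=
  (L * x2s^2 / 2) * z1^2 + (1/2) * z2^2 * (L * (z1 + ks)^2 + CH) + (CL/2) * z3^2

theorem hasDerivAt_slidingLyapunov_comp (L CH CL ks x2s : ℝ) {z1 z2 z3 : ℝ → ℝ}
    {d1 d2 d3 t : ℝ} (h1 : HasDerivAt z1 d1 t) (h2 : HasDerivAt z2 d2 t)
    (h3 : HasDerivAt z3 d3 t) :
    HasDerivAt (fun s => slidingLyapunov L CH CL ks x2s (z1 s) (z2 s) (z3 s))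
      (L * x2s^2 * z1 t * d1 + z2 t * d2 * (L * (z1 t + ks)^2 + CH)
        + L * (z2 t)^2 * (z1 t + ks) * d1 + CL * z3 t * d3) t := by
  have hq : HasDerivAt (fun s => L * (z1 s + ks)^2 + CH) (L * (2 * (z1 t + ks) * d1)) t := by
    simpa using ((((h1.add_const ks).fun_pow 2).const_mul L).add_const CH)
  refine ((((h1.fun_pow 2).const_mul (L * x2s^2 / 2)).add
    (((h2.fun_pow 2).const_mul (1/2)).mul hq)).add ((h3.fun_pow 2).const_mul (CL/2))).congr_deriv ?_
  norm_num
  ring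

theorem stmt_7_general (L CH CL RL α γ1 ks x2s x3s : ℝ)
    (hL : 0 < L) (hCH : 0 < CH) (hCL : 0 < CL)
    (hγ1 : 0 < γ1)
    (z1 z2 z3 : ℝ → ℝ)
    (h1 : ∀ t, HasDerivAt z1 (-γ1 * (z1 t * (z2 t + x2s) + ks * z2 t)) t)
    (h2 : ∀ t, HasDerivAt z2
      ((1 / (L * (z1 t + ks)^2 + CH)) *
        (-L * (z1 t + ks) * (z2 t + x2s) * (-γ1 * (z1 t * (z2 t + x2s) + ks * z2 t))
          - α * CH * z2 t - z3 t * (z1 t + ks) - x3s * z1 t)) t)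
    (h3 : ∀ t, HasDerivAt z3
      (-(1/(RL*CL)) * z3 t
        - (1/(CL*γ1)) * (-γ1 * (z1 t * (z2 t + x2s) + ks * z2 t))) t) :
    ∀ t, HasDerivAt
      (fun s => (L * x2s^2 / 2) * (z1 s)^2
        + (1/2) * (z2 s)^2 * (L * (z1 s + ks)^2 + CH)
        + (CL/2) * (z3 s)^2)
      (-(γ1 * L * x2s^3) * (z1 t)^2
        - (α * CH - γ1 * L * ks * (ks * x2s)) * (z2 t)^2
        - (1/RL) * (z3 t)^2
        + γ1 * L * x2s * z1 t * (z2 t)^2 * (z1 t + 2*ks)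
        + z1 t * (x2s * z3 t - x3s * z2 t)) t := by
  intro t
  have hden : L * (z1 t + ks)^2 + CH ≠ 0 := by positivity
  -- the weight `L (z1 + ks)^2 + CH` of `z2^2` in `V` cancels the denominator of `ż2`
  refine (hasDerivAt_slidingLyapunov_comp L CH CL ks x2s (h1 t) (h2 t) (h3 t)).congr_deriv ?_
  field_simp
  ring

/-- Lyapunov derivative along the reduced sliding dynamics (adaptive
current control): V̇ equals the stated expression. -/
theorem stmt_7 (L CH CL RL α γ1 ks x2s x3s : ℝ)
    (hL : 0 < L) (hCH : 0 < CH) (hCL : 0 < CL) (hRL : 0 < RL)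
    (hα : 0 < α) (hγ1 : 0 < γ1) (hx2s : 0 < x2s) (hx3s : 0 < x3s)
    (z1 z2 z3 : ℝ → ℝ)
    (h1 : ∀ t, HasDerivAt z1 (-γ1 * (z1 t * (z2 t + x2s) + ks * z2 t)) t)
    (h2 : ∀ t, HasDerivAt z2
      ((1 / (L * (z1 t + ks)^2 + CH)) *
        (-L * (z1 t + ks) * (z2 t + x2s) * (-γ1 * (z1 t * (z2 t + x2s) + ks * z2 t))
          - α * CH * z2 t - z3 t * (z1 t + ks) - x3s * z1 t)) t)
    (h3 : ∀ t, HasDerivAt z3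
      (-(1/(RL*CL)) * z3 t
        - (1/(CL*γ1)) * (-γ1 * (z1 t * (z2 t + x2s) + ks * z2 t))) t) :
    ∀ t, HasDerivAt
      (fun s => (L * x2s^2 / 2) * (z1 s)^2
        + (1/2) * (z2 s)^2 * (L * (z1 s + ks)^2 + CH)
        + (CL/2) * (z3 s)^2)
      (-(γ1 * L * x2s^3) * (z1 t)^2
        - (α * CH - γ1 * L * ks * (ks * x2s)) * (z2 t)^2
        - (1/RL) * (z3 t)^2
        + γ1 * L * x2s * z1 t * (z2 t)^2 * (z1 t + 2*ks)
        + z1 t * (x2s * z3 t - x3s * z2 t)) t :=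
  stmt_7_general L CH CL RL α γ1 ks x2s x3s hL hCH hCL hγ1 z1 z2 z3 h1 h2 h3
end

section
/- Suppose σ : [0, ∞) → ℝ is absolutely continuous, σ(0) > 0, and σ(t)σ̇(t) ≤ -ω|σ(t)| for almost all t with ω > 0, as long as σ(t) ≠ 0. Then σ reaches zero in finite time, and the reaching time satisfies t_reach ≤ σ(0)/ω. -/
/-!
Suppose σ had no zero on `[0, σ 0 / ω]`. Being a primitive, σ is continuous, so by the intermediate
value theorem it stays positive there; the sliding condition then reads `σ' ≤ -ω`, and integrating
over `[0, σ 0 / ω]` gives `σ (σ 0 / ω) ≤ σ 0 - ω · (σ 0 / ω) = 0`, a contradiction.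
-/

open MeasureTheory intervalIntegral Set

theorem continuousOn_Icc_of_eq_add_integral {σ f : ℝ → ℝ} {a b : ℝ} (hab : a ≤ b)
    (hf : IntervalIntegrable f volume a b) (hσ : ∀ t ∈ Icc a b, σ t = σ a + ∫ u in a..t, f u) :
    ContinuousOn σ (Icc a b) := by
  have hprim : ContinuousOn (fun t => σ a + ∫ u in a..t, f u) (uIcc a b) :=
    continuousOn_const.add (continuousOn_primitive_interval' hf left_mem_uIcc)
  rw [uIcc_of_le hab] at hprim
  exact hprim.congr hσ

theorem ContinuousOn.pos_of_ne_zero_Icc {σ : ℝ → ℝ} {a b : ℝ} (hσ : ContinuousOn σ (Icc a b))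
    (ha : 0 < σ a) (hne : ∀ t ∈ Icc a b, σ t ≠ 0) : ∀ t ∈ Icc a b, 0 < σ t := by
  intro t ht
  by_contra! hle
  have hsub : Icc a t ⊆ Icc a b := Icc_subset_Icc le_rfl ht.2
  obtain ⟨c, hc, hσc⟩ := intermediate_value_Icc' ht.1 (hσ.mono hsub) ⟨hle, ha.le⟩
  exact hne c (hsub hc) hσc

theorem le_neg_of_mul_le_neg_mul_abs {x y ω : ℝ} (hx : 0 < x) (h : x * y ≤ -ω * |x|) :
    y ≤ -ω := by
  rw [abs_of_pos hx] at h
  exact le_of_mul_le_mul_left (by linarith) hx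

theorem integral_le_mul_sub_of_ae_le_const {f : ℝ → ℝ} {a b c : ℝ} (hab : a ≤ b)
    (hf : IntervalIntegrable f volume a b) (hfc : f ≤ᵐ[volume.restrict (Icc a b)] fun _ => c) :
    ∫ u in a..b, f u ≤ c * (b - a) := by
  have := integral_mono_ae_restrict hab hf intervalIntegrable_const hfc
  rwa [intervalIntegral.integral_const, smul_eq_mul, mul_comm] at this

/-- Sliding-mode reaching time: if σ is absolutely continuous (encoded via the
fundamental theorem of calculus with an integrable derivative σ'), σ(0) > 0,
and σσ' ≤ -ω|σ| for a.e. t ≥ 0 as long as σ ≠ 0, then σ reaches zero within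
time σ(0)/ω. -/
theorem stmt_13 (σ σ' : ℝ → ℝ) (ω : ℝ) (hω : 0 < ω) (h0 : 0 < σ 0)
    (hint : ∀ s t : ℝ, 0 ≤ s → s ≤ t → IntervalIntegrable σ' volume s t)
    (hFTC : ∀ s t : ℝ, 0 ≤ s → s ≤ t → σ t - σ s = ∫ u in s..t, σ' u)
    (hineq : ∀ᵐ t ∂(volume.restrict (Set.Ici (0:ℝ))),
      σ t ≠ 0 → σ t * σ' t ≤ -ω * |σ t|) :
    ∃ T : ℝ, 0 ≤ T ∧ T ≤ σ 0 / ω ∧ σ T = 0 := by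
  set T₀ := σ 0 / ω
  have hT₀ : 0 ≤ T₀ := (div_pos h0 hω).le
  by_contra! hne
  have hcont : ContinuousOn σ (Icc 0 T₀) :=
    continuousOn_Icc_of_eq_add_integral hT₀ (hint 0 T₀ le_rfl hT₀) fun t ht => by
      linarith [hFTC 0 t le_rfl ht.1]
  have hpos := hcont.pos_of_ne_zero_Icc h0 fun t ht => hne t ht.1 ht.2
  have hderiv : σ' ≤ᵐ[volume.restrict (Icc 0 T₀)] fun _ => -ω := by
    filter_upwards [ae_restrict_of_ae_restrict_of_subset Icc_subset_Ici_self hineq,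
      ae_restrict_mem measurableSet_Icc] with t hsliding ht
    exact le_neg_of_mul_le_neg_mul_abs (hpos t ht) (hsliding (hpos t ht).ne')
  have hdecay := integral_le_mul_sub_of_ae_le_const hT₀ (hint 0 T₀ le_rfl hT₀) hderiv
  have hreach : -ω * (T₀ - 0) = -σ 0 := by
    rw [sub_zero, neg_mul, mul_div_cancel₀ _ hω.ne']
  linarith [hpos T₀ ⟨hT₀, le_rfl⟩, hFTC 0 T₀ le_rfl hT₀]
end
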